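/- Conversely, if v solves M v̇ + Πᵀ(N(v)v + A v − f) = 0 with initial condition J v(0) = 0, then J v(t) = 0 for all t, and setting p = S⁻¹ J M⁻¹ (N(v)v + A v − f) gives a solution of the original differential-algebraic system. -/

import Mathlib

/-!
With `S = J M⁻¹ Jᵀ`, one has `Π M⁻¹ Jᵀ = 0`, hence `J M⁻¹ Πᵀ = 0` for symmetric `M`. Multiplying
the projected equation by `J M⁻¹` therefore gives `d/dt (J v) = 0`, so the constraint `J v = 0`
propagates from `t = 0`. Expanding `Πᵀ = I - Jᵀ S⁻¹ J M⁻¹` turns the projected equation into the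
momentum equation with the multiplier `p = S⁻¹ J M⁻¹ (N(v) v + A v - f)`.
-/

open Matrix

section ConstraintProjector

variable {K : Type*} [Field K] {m n : Type*} [Fintype m] [Fintype n] [DecidableEq m] [DecidableEq n]

/-- The paper's `Π`. -/
noncomputable def constraintProjector (M : Matrix n n K) (J : Matrix m n K) : Matrix n n K :=
  1 - M⁻¹ * Jᵀ * (J * M⁻¹ * Jᵀ)⁻¹ * J

variable {M : Matrix n n K} {J : Matrix m n K}

theorem constraintProjector_mul_inv_mul_transpose (hS : IsUnit (J * M⁻¹ * Jᵀ).det) :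
    constraintProjector M J * (M⁻¹ * Jᵀ) = 0 := by
  have hcancel : M⁻¹ * Jᵀ * (J * M⁻¹ * Jᵀ)⁻¹ * J * (M⁻¹ * Jᵀ)
      = M⁻¹ * Jᵀ * ((J * M⁻¹ * Jᵀ)⁻¹ * (J * M⁻¹ * Jᵀ)) := by
    simp only [Matrix.mul_assoc]
  rw [constraintProjector, Matrix.sub_mul, Matrix.one_mul, hcancel, nonsing_inv_mul _ hS,
    Matrix.mul_one, sub_self]

theorem mul_inv_mul_transpose_constraintProjector (hM : M.IsSymm)
    (hS : IsUnit (J * M⁻¹ * Jᵀ).det) :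
    J * M⁻¹ * (constraintProjector M J)ᵀ = 0 := by
  simpa only [transpose_mul, transpose_transpose, hM.inv.eq, transpose_zero] using
    congrArg transpose (constraintProjector_mul_inv_mul_transpose hS)

theorem transpose_constraintProjector (hM : M.IsSymm) :
    (constraintProjector M J)ᵀ = 1 - Jᵀ * (J * M⁻¹ * Jᵀ)⁻¹ * J * M⁻¹ := by
  have hS : (J * M⁻¹ * Jᵀ).IsSymm := by
    simp only [IsSymm, transpose_mul, transpose_transpose, hM.inv.eq, Matrix.mul_assoc]
  simp only [constraintProjector, transpose_sub, transpose_one, transpose_mul,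
    transpose_transpose, hM.inv.eq, hS.inv.eq]
  simp only [Matrix.mul_assoc]

theorem mulVec_eq_zero_of_mulVec_add_constraintProjector_eq_zero (hMu : IsUnit M.det)
    (hM : M.IsSymm) (hS : IsUnit (J * M⁻¹ * Jᵀ).det) {x y : n → K}
    (h : M *ᵥ x + (constraintProjector M J)ᵀ *ᵥ y = 0) : J *ᵥ x = 0 :=
  calc J *ᵥ x = J *ᵥ (M⁻¹ *ᵥ (M *ᵥ x)) := by
        rw [mulVec_mulVec _ M⁻¹ M, nonsing_inv_mul _ hMu, one_mulVec]
    _ = -((J * M⁻¹ * (constraintProjector M J)ᵀ) *ᵥ y) := by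
        rw [eq_neg_of_add_eq_zero_left h, mulVec_neg, mulVec_neg, mulVec_mulVec, mulVec_mulVec]
    _ = 0 := by rw [mul_inv_mul_transpose_constraintProjector hM hS, zero_mulVec, neg_zero]

theorem mulVec_add_sub_eq_zero_of_mulVec_add_constraintProjector_eq_zero (hM : M.IsSymm)
    {x y : n → K} (h : M *ᵥ x + (constraintProjector M J)ᵀ *ᵥ y = 0) :
    M *ᵥ x + y - Jᵀ *ᵥ ((J * M⁻¹ * Jᵀ)⁻¹ *ᵥ (J *ᵥ (M⁻¹ *ᵥ y))) = 0 :=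
  calc _ = M *ᵥ x + (constraintProjector M J)ᵀ *ᵥ y := by
        rw [transpose_constraintProjector hM, sub_mulVec, one_mulVec]
        simp only [mulVec_mulVec, Matrix.mul_assoc]
        abel
    _ = 0 := h

end ConstraintProjector

theorem Matrix.linearIndependent_row_of_rank_eq {K : Type*} [Field K] {m n : Type*}
    [Fintype m] [Fintype n] {J : Matrix m n K} (h : J.rank = Fintype.card m) :
    LinearIndependent K J.row := by
  rw [linearIndependent_iff_card_eq_finrank_span, Set.finrank, ← J.rank_eq_finrank_span_row, h]

theorem Matrix.PosDef.mul_inv_mul_transpose {m n : Type*} [Fintype m] [Fintype n]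
    [DecidableEq n] {M : Matrix n n ℝ} {J : Matrix m n ℝ} (hM : M.PosDef)
    (hJ : LinearIndependent ℝ J.row) : (J * M⁻¹ * Jᵀ).PosDef := by
  simpa only [conjTranspose_eq_transpose_of_trivial] using
    hM.inv.mul_mul_conjTranspose_same (vecMul_injective_iff.mpr hJ)

theorem Matrix.mulVec_eq_of_mulVec_deriv_eq_zero {m n : Type*} [Fintype m] [Fintype n]
    {J : Matrix m n ℝ} {v : ℝ → n → ℝ} (hv : Differentiable ℝ v)
    (h : ∀ t, J *ᵥ deriv v t = 0) (t s : ℝ) : J *ᵥ v t = J *ᵥ v s := by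
  have hJv : ∀ t, HasDerivAt (fun t => J *ᵥ v t) (J *ᵥ deriv v t) t := fun t =>
    J.mulVecLin.toContinuousLinearMap.hasFDerivAt.comp_hasDerivAt t (hv t).hasDerivAt
  exact is_const_of_deriv_eq_zero (fun t => (hJv t).differentiableAt)
    (fun t => (hJv t).deriv.trans (h t)) t s

theorem projected_ode_to_dae_general
    (nv np : ℕ)
    (M A : Matrix (Fin nv) (Fin nv) ℝ) (J : Matrix (Fin np) (Fin nv) ℝ)
    (N : (Fin nv → ℝ) → Matrix (Fin nv) (Fin nv) ℝ)
    (f : ℝ → (Fin nv → ℝ))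
    (v : ℝ → (Fin nv → ℝ))
    (hM : M.PosDef) (hJ : J.rank = np)
    (hv : Differentiable ℝ v)
    (hode : ∀ t, M *ᵥ deriv v t
        + (1 - M⁻¹ * Jᵀ * (J * M⁻¹ * Jᵀ)⁻¹ * J)ᵀ *ᵥ ((N (v t)) *ᵥ v t + A *ᵥ v t - f t) = 0)
    (h0 : J *ᵥ v 0 = 0) :
    (∀ t, J *ᵥ v t = 0)
    ∧ (∀ t, M *ᵥ deriv v t + (N (v t)) *ᵥ v t + A *ᵥ v t
        - Jᵀ *ᵥ ((J * M⁻¹ * Jᵀ)⁻¹ *ᵥ (J *ᵥ (M⁻¹ *ᵥ ((N (v t)) *ᵥ v t + A *ᵥ v t - f t))))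
        = f t) := by
  have hMs : M.IsSymm := isHermitian_iff_isSymm.mp hM.isHermitian
  have hJrows : LinearIndependent ℝ J.row :=
    J.linearIndependent_row_of_rank_eq (by rwa [Fintype.card_fin])
  have hS : IsUnit (J * M⁻¹ * Jᵀ).det := (hM.mul_inv_mul_transpose hJrows).det_pos.ne'.isUnit
  have hJv' : ∀ t, J *ᵥ deriv v t = 0 := fun t =>
    mulVec_eq_zero_of_mulVec_add_constraintProjector_eq_zero hM.det_pos.ne'.isUnit hMs hS (hode t)
  refine ⟨fun t => by rw [J.mulVec_eq_of_mulVec_deriv_eq_zero hv hJv' t 0, h0], fun t => ?_⟩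
  rw [← sub_eq_zero,
    ← mulVec_add_sub_eq_zero_of_mulVec_add_constraintProjector_eq_zero hMs (hode t)]
  abel

theorem projected_ode_to_dae
    (nv np : ℕ)
    (M A : Matrix (Fin nv) (Fin nv) ℝ) (J : Matrix (Fin np) (Fin nv) ℝ)
    (N : (Fin nv → ℝ) → Matrix (Fin nv) (Fin nv) ℝ)
    (f : ℝ → (Fin nv → ℝ))
    (v : ℝ → (Fin nv → ℝ))
    (hM : M.PosDef) (hJ : J.rank = np)
    (hNcont : Continuous N) (hfcont : Continuous f)
    (hv : Differentiable ℝ v)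
    (hode : ∀ t, M *ᵥ deriv v t
        + (1 - M⁻¹ * Jᵀ * (J * M⁻¹ * Jᵀ)⁻¹ * J)ᵀ *ᵥ ((N (v t)) *ᵥ v t + A *ᵥ v t - f t) = 0)
    (h0 : J *ᵥ v 0 = 0) :
    (∀ t, J *ᵥ v t = 0)
    ∧ (∀ t, M *ᵥ deriv v t + (N (v t)) *ᵥ v t + A *ᵥ v t
        - Jᵀ *ᵥ ((J * M⁻¹ * Jᵀ)⁻¹ *ᵥ (J *ᵥ (M⁻¹ *ᵥ ((N (v t)) *ᵥ v t + A *ᵥ v t - f t))))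
        = f t) :=
  projected_ode_to_dae_general nv np M A J N f v hM hJ hv hode h0
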